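/- arXiv:2409.05253 — 2 statements merged into one kernel-verified Lean document; each statement's English description precedes it below -/
import Mathlib

section
/- In the setting of the lattice line Z with calculus as above, let g^{++}, g^{--} be nowhere-zero real-valued functions on Z, and define the connection ∇ e^± = (1 - ρ_±) e^± ⊗ e^± with ρ_± = g^{±±}/R_{±1}(g^{±±}). Then the associated bimodule map σ determined by σ(e^± ⊗ df) = ∇(e^± f) - ∇(e^±) f satisfies σ(e^± ⊗ e^∓) = e^∓ ⊗ e^± and σ(e^± ⊗ e^±) = ρ_± e^± ⊗ e^±. -/
/-- Shift operator on functions on `ℤ`: `(R_k f)(n) = f(n + k)`. -/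
def Rz (k : ℤ) (f : ℤ → ℂ) : ℤ → ℂ := fun n => f (n + k)

/-- Directions: `sgn 0 = +1` (for `e⁺`), `sgn 1 = -1` (for `e⁻`). -/
def sgn : Fin 2 → ℤ := ![1, -1]

/-- Basis 1-forms: `bas a` is `e^a`, a 1-form recorded by its components. -/
def bas (a : Fin 2) : Fin 2 → ℤ → ℂ := fun b => if b = a then 1 else 0

/-- Tensor product over the algebra: component `(a,b)` of `ω ⊗_A η` is `ω_a · R_{sgn a}(η_b)`,
using `e^a f = R_{sgn a}(f) e^a`. -/
def tmulZ (ω η : Fin 2 → ℤ → ℂ) : Fin 2 × Fin 2 → ℤ → ℂ :=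
  fun p => ω p.1 * Rz (sgn p.1) (η p.2)

/-- `d f = (R₊f - f) e⁺ + (R₋f - f) e⁻` in components. -/
def d0Z (f : ℤ → ℂ) : Fin 2 → ℤ → ℂ := fun a => Rz (sgn a) f - f

/-- `ρ_± = g^{±±} / R_{±1}(g^{±±})`. -/
noncomputable def rho (g : Fin 2 → ℤ → ℝ) (a : Fin 2) : ℤ → ℂ :=
  fun n => (g a n : ℂ) / (g a (n + sgn a) : ℂ)

/-- The left connection with `∇ e^± = (1 - ρ_±) e^± ⊗ e^±`, extended by
`∇(f ξ) = df ⊗ ξ + f ∇ξ`, in components. -/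
noncomputable def nablaZ (g : Fin 2 → ℤ → ℝ) (ω : Fin 2 → ℤ → ℂ) : Fin 2 × Fin 2 → ℤ → ℂ :=
  fun p => d0Z (ω p.2) p.1 + (if p.1 = p.2 then ω p.2 * (1 - rho g p.2) else 0)

/-- Right action of a function on 1-forms: `(ω f)_a = ω_a · R_{sgn a}(f)`. -/
def rOneZ (ω : Fin 2 → ℤ → ℂ) (f : ℤ → ℂ) : Fin 2 → ℤ → ℂ :=
  fun a => ω a * Rz (sgn a) f

/-- Right action of a function on elements of `Ω¹ ⊗_A Ω¹`. -/
def rTwoZ (T : Fin 2 × Fin 2 → ℤ → ℂ) (f : ℤ → ℂ) : Fin 2 × Fin 2 → ℤ → ℂ :=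
  fun p => T p * Rz (sgn p.1) (Rz (sgn p.2) f)

/-!
Since `σ` is additive and left `A`-linear and the `e^a ⊗ e^b` form an `A`-basis of `Ω¹ ⊗_A Ω¹`,
the defining relation says `∑_b R_a(R_b f - f) σ(e^a ⊗ e^b) = ∇(e^a f) - ∇(e^a) f` for every `f`,
and a direct computation writes the right-hand side as `∑_b R_a(R_b f - f) τ_{ab}`, where
`τ_{ab} = latticeBraiding g a b` are the claimed values. The coefficient vectors `(1, -1)` of
`f(n) = n` and `(2m + 1, 1 - 2m)`, `m = n + sgn a`, of `f(n) = n²` span `A²` pointwise, so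
`σ(e^a ⊗ e^b) = τ_{ab}`.
-/

noncomputable def latticeBraiding (g : Fin 2 → ℤ → ℝ) (a b : Fin 2) : Fin 2 × Fin 2 → ℤ → ℂ :=
  if a = b then rho g a • tmulZ (bas a) (bas a) else tmulZ (bas b) (bas a)

lemma tmulZ_bas_d0Z (a : Fin 2) (f : ℤ → ℂ) :
    tmulZ (bas a) (d0Z f) = ∑ b, Rz (sgn a) (d0Z f b) • tmulZ (bas a) (bas b) := by
  funext ⟨p₁, p₂⟩ n
  fin_cases a <;> fin_cases p₁ <;> fin_cases p₂ <;> simp [tmulZ, bas, Rz]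

lemma nablaZ_rOneZ_bas_sub (g : Fin 2 → ℤ → ℝ) (a : Fin 2) (f : ℤ → ℂ) :
    nablaZ g (rOneZ (bas a) f) - rTwoZ (nablaZ g (bas a)) f
      = ∑ b, Rz (sgn a) (d0Z f b) • latticeBraiding g a b := by
  funext ⟨p₁, p₂⟩ n
  fin_cases a <;> fin_cases p₁ <;> fin_cases p₂ <;>
    simp [nablaZ, rOneZ, rTwoZ, d0Z, latticeBraiding, tmulZ, bas, Rz, sgn] <;> ring

lemma Rz_d0Z_id (s : ℤ) :
    Rz s (d0Z (fun n => (n : ℂ)) 0) = 1 ∧ Rz s (d0Z (fun n => (n : ℂ)) 1) = -1 := by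
  constructor <;> funext n <;> simp [Rz, d0Z, sgn]

lemma Rz_d0Z_sq (s : ℤ) :
    Rz s (d0Z (fun n => (n : ℂ) ^ 2) 0) = 2 * Rz s (fun n => (n : ℂ)) + 1 ∧
      Rz s (d0Z (fun n => (n : ℂ) ^ 2) 1) = 1 - 2 * Rz s (fun n => (n : ℂ)) := by
  constructor <;> funext n <;> simp [Rz, d0Z, sgn] <;> ring

lemma eq_zero_of_forall_sum_d0Z_smul_eq_zero {M : Type*} [AddCommGroup M] [Module (ℤ → ℂ) M]
    (s : ℤ) {z : Fin 2 → M} (h : ∀ f, ∑ b, Rz s (d0Z f b) • z b = 0) : z = 0 := by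
  obtain ⟨hid₀, hid₁⟩ := Rz_d0Z_id s
  obtain ⟨hsq₀, hsq₁⟩ := Rz_d0Z_sq s
  have hdiff : z 0 = z 1 := by
    have := h fun n => (n : ℂ)
    rw [Fin.sum_univ_two, hid₀, hid₁, one_smul, neg_one_smul, ← sub_eq_add_neg] at this
    exact sub_eq_zero.mp this
  have htwo : (2 : ℤ → ℂ) • z 0 = 0 := by
    have := h fun n => (n : ℂ) ^ 2
    have hcoeff : (2 * Rz s (fun n => (n : ℂ)) + 1) + (1 - 2 * Rz s fun n => (n : ℂ)) = 2 := by
      ring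
    rwa [Fin.sum_univ_two, hsq₀, hsq₁, ← hdiff, ← add_smul, hcoeff] at this
  have hz₀ : z 0 = 0 := by
    have half : (2⁻¹ : ℤ → ℂ) * 2 = 1 := by funext; norm_num
    rw [← one_smul (ℤ → ℂ) (z 0), ← half, mul_smul, htwo, smul_zero]
  funext b
  fin_cases b
  · exact hz₀
  · simp [← hdiff, hz₀]

theorem lattice_sigma_general (g : Fin 2 → ℤ → ℝ)
    (σ : (Fin 2 × Fin 2 → ℤ → ℂ) → (Fin 2 × Fin 2 → ℤ → ℂ))
    (hadd : ∀ S T, σ (S + T) = σ S + σ T)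
    (hleft : ∀ (f : ℤ → ℂ) (T), σ (fun p => f * T p) = fun p => f * σ T p)
    (hdef : ∀ (a : Fin 2) (f : ℤ → ℂ),
      σ (tmulZ (bas a) (d0Z f)) = nablaZ g (rOneZ (bas a) f) - rTwoZ (nablaZ g (bas a)) f) :
    (∀ a b : Fin 2, a ≠ b → σ (tmulZ (bas a) (bas b)) = tmulZ (bas b) (bas a)) ∧
    (∀ a : Fin 2, σ (tmulZ (bas a) (bas a)) = fun p => rho g a * tmulZ (bas a) (bas a) p) := by
  let L : (Fin 2 × Fin 2 → ℤ → ℂ) →ₗ[ℤ → ℂ] (Fin 2 × Fin 2 → ℤ → ℂ) :=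
    { toFun := σ, map_add' := hadd, map_smul' := hleft }
  have hσ (a b : Fin 2) : σ (tmulZ (bas a) (bas b)) = latticeBraiding g a b := by
    have hz := eq_zero_of_forall_sum_d0Z_smul_eq_zero (sgn a)
      (z := fun b => σ (tmulZ (bas a) (bas b)) - latticeBraiding g a b) fun f => by
        have hlin : σ (tmulZ (bas a) (d0Z f))
            = ∑ b, Rz (sgn a) (d0Z f b) • σ (tmulZ (bas a) (bas b)) := by
          rw [tmulZ_bas_d0Z]
          exact (map_sum L _ _).trans (Finset.sum_congr rfl fun b _ => L.map_smul _ _)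
        simp only [smul_sub, Finset.sum_sub_distrib, sub_eq_zero]
        rw [← hlin, hdef, nablaZ_rOneZ_bas_sub]
    exact sub_eq_zero.mp (congrFun hz b)
  refine ⟨fun a b hab => ?_, fun a => ?_⟩
  · rw [hσ, latticeBraiding, if_neg hab]
  · rw [hσ, latticeBraiding, if_pos rfl]
    rfl

/-- For nowhere-zero real metric coefficients `g^{±±}`, any bimodule map `σ` on `Ω¹ ⊗_A Ω¹`
satisfying `σ(e^a ⊗ df) = ∇(e^a f) - ∇(e^a) f` satisfies `σ(e^± ⊗ e^∓) = e^∓ ⊗ e^±` and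
`σ(e^± ⊗ e^±) = ρ_± e^± ⊗ e^±`. -/
theorem lattice_sigma (g : Fin 2 → ℤ → ℝ) (hg : ∀ a n, g a n ≠ 0)
    (σ : (Fin 2 × Fin 2 → ℤ → ℂ) → (Fin 2 × Fin 2 → ℤ → ℂ))
    (hadd : ∀ S T, σ (S + T) = σ S + σ T)
    (hleft : ∀ (f : ℤ → ℂ) (T), σ (fun p => f * T p) = fun p => f * σ T p)
    (hright : ∀ T (f : ℤ → ℂ), σ (rTwoZ T f) = rTwoZ (σ T) f)
    (hdef : ∀ (a : Fin 2) (f : ℤ → ℂ),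
      σ (tmulZ (bas a) (d0Z f)) = nablaZ g (rOneZ (bas a) f) - rTwoZ (nablaZ g (bas a)) f) :
    (∀ a b : Fin 2, a ≠ b → σ (tmulZ (bas a) (bas b)) = tmulZ (bas b) (bas a)) ∧
    (∀ a : Fin 2, σ (tmulZ (bas a) (bas a)) = fun p => rho g a * tmulZ (bas a) (bas a) p) :=
  lattice_sigma_general g σ hadd hleft hdef
end

section
/- Let q > 0. In the quantum plane 4D calculus, define ψ_+ on Ω^{1,0}⊗Ω^{1,0} by ψ_+(∂z*⊗∂z) = -q^{1/2} δ, ψ_+(∂z⊗∂z*) = q^{3/2} δ, ψ_+(∂z⊗∂z) = ψ_+(∂z*⊗∂z*) = 0, extended as a bimodule map to B[δ,δ^{-1}] where vδ = q^3 δv for v ∈ {z, z*}. Then ψ_+ is well-defined on Ω^{1,0} ⊗_B Ω^{1,0}; in particular ψ_+((∂z) z* ⊗ ∂z*) = ψ_+(∂z ⊗ z* ∂z*) as elements of B[δ,δ^{-1}], where the bimodule relations are z ∂z = q^2 (∂z) z, z* ∂z* = q^2 (∂z*) z*, z ∂z* = q (∂z*) z, z* ∂z = q (∂z) z* + (q^2-1)(∂z*)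 z. -/
/-- Relations for the quantum plane `ℂ_q²` extended by an invertible element `δ`:
generators `z = ι 0`, `z* = ι 1`, `δ = ι 2`, `δ⁻¹ = ι 3`; relations
`z* z = q z z*`, `z δ = q³ δ z`, `z* δ = q³ δ z*`, `δ δ⁻¹ = δ⁻¹ δ = 1`. -/
inductive qpdRel (q : ℝ) : FreeAlgebra ℂ (Fin 4) → FreeAlgebra ℂ (Fin 4) → Prop
  | comm : qpdRel q (FreeAlgebra.ι ℂ 1 * FreeAlgebra.ι ℂ 0)
      ((q : ℂ) • (FreeAlgebra.ι ℂ 0 * FreeAlgebra.ι ℂ 1))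
  | zdelta : qpdRel q (FreeAlgebra.ι ℂ 0 * FreeAlgebra.ι ℂ 2)
      (((q : ℂ) ^ 3) • (FreeAlgebra.ι ℂ 2 * FreeAlgebra.ι ℂ 0))
  | zsdelta : qpdRel q (FreeAlgebra.ι ℂ 1 * FreeAlgebra.ι ℂ 2)
      (((q : ℂ) ^ 3) • (FreeAlgebra.ι ℂ 2 * FreeAlgebra.ι ℂ 1))
  | unitr : qpdRel q (FreeAlgebra.ι ℂ 2 * FreeAlgebra.ι ℂ 3) 1
  | unitl : qpdRel q (FreeAlgebra.ι ℂ 3 * FreeAlgebra.ι ℂ 2) 1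

/-- The extended quantum plane `B[δ, δ⁻¹]`. -/
abbrev QPd (q : ℝ) := RingQuot (qpdRel q)

/-- The generators: `Xg q 0 = z`, `Xg q 1 = z*`, `Xg q 2 = δ`, `Xg q 3 = δ⁻¹`. -/
def Xg (q : ℝ) (i : Fin 4) : QPd q := RingQuot.mkAlgHom ℂ (qpdRel q) (FreeAlgebra.ι ℂ i)

noncomputable section
namespace PsiWD
variable (q : ℝ)

theorem rel_comm : Xg q 1 * Xg q 0 = (q : ℂ) • (Xg q 0 * Xg q 1) := by
  have h := RingQuot.mkAlgHom_rel ℂ (qpdRel.comm (q := q))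
  rw [map_mul, map_smul, map_mul] at h; exact h

theorem rel_zd : Xg q 0 * Xg q 2 = ((q : ℂ) ^ 3) • (Xg q 2 * Xg q 0) := by
  have h := RingQuot.mkAlgHom_rel ℂ (qpdRel.zdelta (q := q))
  rw [map_mul, map_smul, map_mul] at h; exact h

theorem rel_zsd : Xg q 1 * Xg q 2 = ((q : ℂ) ^ 3) • (Xg q 2 * Xg q 1) := by
  have h := RingQuot.mkAlgHom_rel ℂ (qpdRel.zsdelta (q := q))
  rw [map_mul, map_smul, map_mul] at h; exact h

theorem rel_ur : Xg q 2 * Xg q 3 = 1 := by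
  have h := RingQuot.mkAlgHom_rel ℂ (qpdRel.unitr (q := q))
  rw [map_mul, map_one] at h; exact h

theorem rel_ul : Xg q 3 * Xg q 2 = 1 := by
  have h := RingQuot.mkAlgHom_rel ℂ (qpdRel.unitl (q := q))
  rw [map_mul, map_one] at h; exact h

/-- commutation with δ, parametric versions -/
theorem zdel (t : QPd q) : Xg q 0 * (Xg q 2 * t) = ((q : ℂ) ^ 3) • (Xg q 2 * (Xg q 0 * t)) := by
  rw [← mul_assoc, rel_zd, smul_mul_assoc, mul_assoc]

theorem zsdel (t : QPd q) : Xg q 1 * (Xg q 2 * t) = ((q : ℂ) ^ 3) • (Xg q 2 * (Xg q 1 * t)) := by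
  rw [← mul_assoc, rel_zsd, smul_mul_assoc, mul_assoc]

theorem didel (t : QPd q) : Xg q 3 * (Xg q 2 * t) = Xg q 2 * (Xg q 3 * t) := by
  rw [← mul_assoc, rel_ul, ← mul_assoc, rel_ur, one_mul]

abbrev Mat (q : ℝ) := Matrix (Fin 2) (Fin 2) (QPd q)

def Agen : Fin 4 → Mat q
  | 0 => !![((q:ℂ)^2) • Xg q 0, 0; 0, (q:ℂ) • Xg q 0]
  | 1 => !![(q:ℂ) • Xg q 1, 0; ((q:ℂ)^2 - 1) • Xg q 0, ((q:ℂ)^2) • Xg q 1]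
  | 2 => !![Xg q 2, 0; 0, Xg q 2]
  | 3 => !![Xg q 3, 0; 0, Xg q 3]

def Mgen : Fin 4 → Mat q
  | 0 => !![(((q:ℂ)^2)⁻¹) • Xg q 0, 0; 0, ((q:ℂ)⁻¹) • Xg q 0]
  | 1 => !![((q:ℂ)⁻¹) • Xg q 1, ((((q:ℂ)^2)⁻¹ - 1)) • Xg q 0; 0, (((q:ℂ)^2)⁻¹) • Xg q 1]
  | 2 => !![Xg q 2, 0; 0, Xg q 2]
  | 3 => !![Xg q 3, 0; 0, Xg q 3]

def Amat : QPd q →ₐ[ℂ] Mat q :=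
  RingQuot.liftAlgHom ℂ ⟨FreeAlgebra.lift ℂ (Agen q), by
    intro x y h
    induction h <;>
      simp only [map_mul, map_smul, map_one, FreeAlgebra.lift_ι_apply] <;>
      ext i j <;>
      fin_cases i <;> fin_cases j <;>
      simp [Agen, Matrix.mul_apply, Matrix.one_apply, Fin.sum_univ_two, smul_mul_assoc,
        mul_smul_comm, smul_smul, rel_comm q, rel_zd q, rel_zsd q, rel_ur q, rel_ul q] <;>
      ring_nf⟩

def Mmat (hq : (q : ℂ) ≠ 0) : QPd q →ₐ[ℂ] Mat q :=
  RingQuot.liftAlgHom ℂ ⟨FreeAlgebra.lift ℂ (Mgen q), by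
    intro x y h
    induction h <;>
      simp only [map_mul, map_smul, map_one, FreeAlgebra.lift_ι_apply] <;>
      ext i j <;>
      fin_cases i <;> fin_cases j <;>
      simp [Mgen, Matrix.mul_apply, Matrix.one_apply, Fin.sum_univ_two, smul_mul_assoc,
        mul_smul_comm, smul_smul, rel_comm q, rel_zd q, rel_zsd q, rel_ur q, rel_ul q] <;>
      (try match_scalars) <;> field_simp <;> ring⟩

theorem Amat_Xg (i : Fin 4) : Amat q (Xg q i) = Agen q i := by
  rw [Xg, Amat, RingQuot.liftAlgHom_mkAlgHom_apply, FreeAlgebra.lift_ι_apply]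

theorem Mmat_Xg (hq : (q : ℂ) ≠ 0) (i : Fin 4) : Mmat q hq (Xg q i) = Mgen q i := by
  rw [Xg, Mmat, RingQuot.liftAlgHom_mkAlgHom_apply, FreeAlgebra.lift_ι_apply]

/-- induction principle for `QPd q` -/
theorem qpd_induction {P : QPd q → Prop} (h0 : ∀ c : ℂ, P (algebraMap ℂ (QPd q) c))
    (h1 : ∀ i, P (Xg q i)) (hmul : ∀ x y, P x → P y → P (x * y))
    (hadd : ∀ x y, P x → P y → P (x + y)) : ∀ x, P x := by
  intro x
  obtain ⟨y, rfl⟩ := RingQuot.mkAlgHom_surjective ℂ (qpdRel q) x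
  induction y using FreeAlgebra.induction with
  | grade0 c => simpa [AlgHom.commutes] using h0 c
  | grade1 i => exact h1 i
  | mul a b ha hb => rw [map_mul]; exact hmul _ _ ha hb
  | add a b ha hb => rw [map_add]; exact hadd _ _ ha hb

section Maps
variable (hq : (q : ℂ) ≠ 0)

/-- right action of `B[δ,δ⁻¹]` on `Ω^{1,0}` in left coordinates -/
def rA (p : QPd q × QPd q) (f : QPd q) : QPd q × QPd q :=
  (p.1 * Mmat q hq f 0 0 + p.2 * Mmat q hq f 1 0,
   p.1 * Mmat q hq f 0 1 + p.2 * Mmat q hq f 1 1)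

/-- left-to-right coordinate change -/
def Rc (p : QPd q × QPd q) : QPd q × QPd q :=
  (Amat q p.1 0 0 + Amat q p.2 0 1, Amat q p.1 1 0 + Amat q p.2 1 1)

/-- the pairing in right coordinates -/
def Fm (p v : QPd q × QPd q) : QPd q :=
  ((Real.sqrt q * q : ℝ) : ℂ) • (Xg q 2 * (Amat q p.1 1 0 * v.1 + Amat q p.1 1 1 * v.2))
  - ((Real.sqrt q : ℝ) : ℂ) • (Xg q 2 * (Amat q p.2 0 0 * v.1 + Amat q p.2 0 1 * v.2))

/-- the map ψ₊ -/
def psi (p v : QPd q × QPd q) : QPd q := Fm q (Rc q p) (Rc q v)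

theorem Fm_add_left (p p' v : QPd q × QPd q) : Fm q (p + p') v = Fm q p v + Fm q p' v := by
  simp only [Fm, Prod.fst_add, Prod.snd_add, map_add, Matrix.add_apply, add_mul, mul_add,
    smul_add, smul_sub]
  abel

theorem Fm_add_right (p v v' : QPd q × QPd q) : Fm q p (v + v') = Fm q p v + Fm q p v' := by
  simp only [Fm, Prod.fst_add, Prod.snd_add, mul_add, smul_add, smul_sub]
  abel

theorem Fm_smul_left (c : ℂ) (p v : QPd q × QPd q) : Fm q (c • p) v = c • Fm q p v := by
  simp only [Fm, Prod.smul_fst, Prod.smul_snd, map_smul, Matrix.smul_apply, smul_mul_assoc,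
    mul_add, mul_smul_comm, smul_add, smul_sub, smul_smul]
  module

theorem Fm_mulf_right (p v : QPd q × QPd q) (f : QPd q) :
    Fm q p (v.1 * f, v.2 * f) = Fm q p v * f := by
  simp only [Fm, sub_mul, smul_mul_assoc, add_mul, mul_assoc]

theorem Fm_Af_right (p v : QPd q × QPd q) (f : QPd q) :
    Fm q (p.1 * f, p.2 * f) v
      = Fm q p (Amat q f 0 0 * v.1 + Amat q f 0 1 * v.2,
                Amat q f 1 0 * v.1 + Amat q f 1 1 * v.2) := by
  simp only [Fm, map_mul, Matrix.mul_apply, Fin.sum_univ_two, add_mul, mul_add, mul_assoc,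
    smul_add, smul_sub]
  abel

theorem Rc_add (p p' : QPd q × QPd q) : Rc q (p + p') = Rc q p + Rc q p' := by
  simp only [Rc, Prod.fst_add, Prod.snd_add, map_add, Matrix.add_apply, Prod.mk_add_mk]
  rw [Prod.mk.injEq]
  exact ⟨by abel, by abel⟩

theorem Rc_smul (c : ℂ) (p : QPd q × QPd q) : Rc q (c • p) = c • Rc q p := by
  simp [Rc, map_smul, Matrix.smul_apply, smul_add]

theorem Rc_leftmul (f : QPd q) (p : QPd q × QPd q) :
    Rc q (f * p.1, f * p.2)
      = (Amat q f 0 0 * (Rc q p).1 + Amat q f 0 1 * (Rc q p).2,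
         Amat q f 1 0 * (Rc q p).1 + Amat q f 1 1 * (Rc q p).2) := by
  simp only [Rc, map_mul, Matrix.mul_apply, Fin.sum_univ_two, add_mul, mul_add]
  rw [Prod.mk.injEq]
  exact ⟨by abel, by abel⟩

theorem Rc10 : Rc q (1, 0) = (1, 0) := by
  simp [Rc, Matrix.one_apply]

theorem Rc01 : Rc q (0, 1) = (0, 1) := by
  simp [Rc, Matrix.one_apply]


theorem key1gen0 (p v : QPd q × QPd q) :
    Fm q (Amat q (Xg q 0) 0 0 * p.1 + Amat q (Xg q 0) 0 1 * p.2,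
          Amat q (Xg q 0) 1 0 * p.1 + Amat q (Xg q 0) 1 1 * p.2) v = Xg q 0 * Fm q p v := by
  simp only [Fm, Amat_Xg, Agen, map_add, map_mul, map_smul, Matrix.smul_apply,
    Matrix.mul_apply, Matrix.add_apply, Fin.sum_univ_two, Matrix.cons_val', Matrix.cons_val_zero,
    Matrix.cons_val_one, Matrix.head_cons, Matrix.head_fin_const, Matrix.empty_val',
    Matrix.cons_val_fin_one, Matrix.of_apply, smul_mul_assoc, mul_smul_comm, zero_mul,
    mul_zero, add_zero, zero_add, smul_add, smul_sub, smul_smul, mul_add, mul_sub, add_mul,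
    mul_assoc, smul_zero, zdel q, zsdel q, didel q, sub_mul]
  try module

theorem key1gen1 (p v : QPd q × QPd q) :
    Fm q (Amat q (Xg q 1) 0 0 * p.1 + Amat q (Xg q 1) 0 1 * p.2,
          Amat q (Xg q 1) 1 0 * p.1 + Amat q (Xg q 1) 1 1 * p.2) v = Xg q 1 * Fm q p v := by
  simp only [Fm, Amat_Xg, Agen, map_add, map_mul, map_smul, Matrix.smul_apply,
    Matrix.mul_apply, Matrix.add_apply, Fin.sum_univ_two, Matrix.cons_val', Matrix.cons_val_zero,
    Matrix.cons_val_one, Matrix.head_cons, Matrix.head_fin_const, Matrix.empty_val',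
    Matrix.cons_val_fin_one, Matrix.of_apply, smul_mul_assoc, mul_smul_comm, zero_mul,
    mul_zero, add_zero, zero_add, smul_add, smul_sub, smul_smul, mul_add, mul_sub, add_mul,
    mul_assoc, smul_zero, zdel q, zsdel q, didel q, sub_mul]
  try module

theorem key1gen2 (p v : QPd q × QPd q) :
    Fm q (Amat q (Xg q 2) 0 0 * p.1 + Amat q (Xg q 2) 0 1 * p.2,
          Amat q (Xg q 2) 1 0 * p.1 + Amat q (Xg q 2) 1 1 * p.2) v = Xg q 2 * Fm q p v := by
  simp only [Fm, Amat_Xg, Agen, map_add, map_mul, map_smul, Matrix.smul_apply,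
    Matrix.mul_apply, Matrix.add_apply, Fin.sum_univ_two, Matrix.cons_val', Matrix.cons_val_zero,
    Matrix.cons_val_one, Matrix.head_cons, Matrix.head_fin_const, Matrix.empty_val',
    Matrix.cons_val_fin_one, Matrix.of_apply, smul_mul_assoc, mul_smul_comm, zero_mul,
    mul_zero, add_zero, zero_add, smul_add, smul_sub, smul_smul, mul_add, mul_sub, add_mul,
    mul_assoc, smul_zero, zdel q, zsdel q, didel q, sub_mul]
  try module

theorem key1gen3 (p v : QPd q × QPd q) :
    Fm q (Amat q (Xg q 3) 0 0 * p.1 + Amat q (Xg q 3) 0 1 * p.2,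
          Amat q (Xg q 3) 1 0 * p.1 + Amat q (Xg q 3) 1 1 * p.2) v = Xg q 3 * Fm q p v := by
  simp only [Fm, Amat_Xg, Agen, map_add, map_mul, map_smul, Matrix.smul_apply,
    Matrix.mul_apply, Matrix.add_apply, Fin.sum_univ_two, Matrix.cons_val', Matrix.cons_val_zero,
    Matrix.cons_val_one, Matrix.head_cons, Matrix.head_fin_const, Matrix.empty_val',
    Matrix.cons_val_fin_one, Matrix.of_apply, smul_mul_assoc, mul_smul_comm, zero_mul,
    mul_zero, add_zero, zero_add, smul_add, smul_sub, smul_smul, mul_add, mul_sub, add_mul,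
    mul_assoc, smul_zero, zdel q, zsdel q, didel q, sub_mul]
  try module

theorem key1 : ∀ f : QPd q, ∀ p v : QPd q × QPd q,
    Fm q (Amat q f 0 0 * p.1 + Amat q f 0 1 * p.2,
          Amat q f 1 0 * p.1 + Amat q f 1 1 * p.2) v = f * Fm q p v := by
  refine qpd_induction q ?_ ?_ ?_ ?_
  · intro c p v
    rw [Algebra.algebraMap_eq_smul_one, map_smul, map_one]
    simp only [Matrix.smul_apply, Matrix.one_apply]
    norm_num
    rw [show ((c • p.1, c • p.2) : QPd q × QPd q) = c • p from rfl, Fm_smul_left]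
  · intro i
    fin_cases i
    · exact key1gen0 q
    · exact key1gen1 q
    · exact key1gen2 q
    · exact key1gen3 q
  · intro f g hf hg p v
    rw [map_mul]
    have harg : ∀ i : Fin 2,
        (Amat q f * Amat q g) i 0 * p.1 + (Amat q f * Amat q g) i 1 * p.2
          = Amat q f i 0 * (Amat q g 0 0 * p.1 + Amat q g 0 1 * p.2)
            + Amat q f i 1 * (Amat q g 1 0 * p.1 + Amat q g 1 1 * p.2) := by
      intro i
      simp only [Matrix.mul_apply, Fin.sum_univ_two, add_mul, mul_add, mul_assoc]
      abel
    rw [harg 0, harg 1,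
      hf (Amat q g 0 0 * p.1 + Amat q g 0 1 * p.2, Amat q g 1 0 * p.1 + Amat q g 1 1 * p.2) v,
      hg p v, mul_assoc]
  · intro f g hf hg p v
    have harg : ∀ i : Fin 2,
        (Amat q f + Amat q g) i 0 * p.1 + (Amat q f + Amat q g) i 1 * p.2
          = (Amat q f i 0 * p.1 + Amat q f i 1 * p.2)
            + (Amat q g i 0 * p.1 + Amat q g i 1 * p.2) := by
      intro i
      simp only [Matrix.add_apply, add_mul]
      abel
    have hsplit : ((Amat q (f + g)) 0 0 * p.1 + (Amat q (f + g)) 0 1 * p.2,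
        (Amat q (f + g)) 1 0 * p.1 + (Amat q (f + g)) 1 1 * p.2)
        = ((Amat q f 0 0 * p.1 + Amat q f 0 1 * p.2, Amat q f 1 0 * p.1 + Amat q f 1 1 * p.2)
          + (Amat q g 0 0 * p.1 + Amat q g 0 1 * p.2, Amat q g 1 0 * p.1 + Amat q g 1 1 * p.2)) := by
      rw [map_add]
      exact Prod.ext (harg 0) (harg 1)
    rw [hsplit, Fm_add_left, hf p v, hg p v, add_mul]

end Maps


section Act
variable (hq : (q : ℂ) ≠ 0)

theorem rA_add (p p' : QPd q × QPd q) (f : QPd q) :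
    rA q hq (p + p') f = rA q hq p f + rA q hq p' f := by
  simp only [rA, Prod.fst_add, Prod.snd_add, add_mul, Prod.mk_add_mk]
  rw [Prod.mk.injEq]
  exact ⟨by abel, by abel⟩

theorem rA_addF (p : QPd q × QPd q) (f g : QPd q) :
    rA q hq p (f + g) = rA q hq p f + rA q hq p g := by
  simp only [rA, map_add, Matrix.add_apply, mul_add, Prod.mk_add_mk]
  rw [Prod.mk.injEq]
  exact ⟨by abel, by abel⟩

theorem rA_mulF (p : QPd q × QPd q) (f g : QPd q) :
    rA q hq p (f * g) = rA q hq (rA q hq p f) g := by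
  simp only [rA, map_mul, Matrix.mul_apply, Fin.sum_univ_two, add_mul, mul_add, mul_assoc]
  rw [Prod.mk.injEq]
  exact ⟨by abel, by abel⟩

theorem rA_one (p : QPd q × QPd q) : rA q hq p 1 = p := by
  simp [rA, Matrix.one_apply]

theorem rA_smul (c : ℂ) (p : QPd q × QPd q) (f : QPd q) :
    rA q hq (c • p) f = c • rA q hq p f := by
  simp [rA, Prod.smul_fst, Prod.smul_snd, Prod.smul_mk, smul_mul_assoc, smul_add]

theorem rA_leftmul (a : QPd q) (p : QPd q × QPd q) (f : QPd q) :
    rA q hq (a * p.1, a * p.2) f = (a * (rA q hq p f).1, a * (rA q hq p f).2) := by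
  simp [rA, mul_add, mul_assoc]

theorem relz : ((Xg q 0, 0) : QPd q × QPd q) = ((q : ℂ) ^ 2) • rA q hq (1, 0) (Xg q 0) := by
  simp only [rA, Mmat_Xg, Mgen, Matrix.cons_val', Matrix.cons_val_zero,
    Matrix.cons_val_one, Matrix.head_cons, Matrix.head_fin_const, Matrix.empty_val',
    Matrix.cons_val_fin_one, Matrix.of_apply, one_mul, zero_mul, mul_zero, add_zero, zero_add,
    mul_one, smul_smul, smul_zero, Prod.smul_mk, Prod.mk_add_mk]
  rw [Prod.mk.injEq]
  constructor <;> match_scalars <;> field_simp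

theorem relzs : ((0, Xg q 1) : QPd q × QPd q) = ((q : ℂ) ^ 2) • rA q hq (0, 1) (Xg q 1) := by
  simp only [rA, Mmat_Xg, Mgen, Matrix.cons_val', Matrix.cons_val_zero,
    Matrix.cons_val_one, Matrix.head_cons, Matrix.head_fin_const, Matrix.empty_val',
    Matrix.cons_val_fin_one, Matrix.of_apply, one_mul, zero_mul, mul_zero, add_zero, zero_add,
    mul_one, smul_smul, smul_zero, Prod.smul_mk, Prod.mk_add_mk]
  rw [Prod.mk.injEq]
  constructor <;> match_scalars <;> field_simp

theorem relzzs : ((0, Xg q 0) : QPd q × QPd q) = (q : ℂ) • rA q hq (0, 1) (Xg q 0) := by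
  simp only [rA, Mmat_Xg, Mgen, Matrix.cons_val', Matrix.cons_val_zero,
    Matrix.cons_val_one, Matrix.head_cons, Matrix.head_fin_const, Matrix.empty_val',
    Matrix.cons_val_fin_one, Matrix.of_apply, one_mul, zero_mul, mul_zero, add_zero, zero_add,
    mul_one, smul_smul, smul_zero, Prod.smul_mk, Prod.mk_add_mk]
  rw [Prod.mk.injEq]
  constructor <;> match_scalars <;> field_simp

theorem relzsz : ((Xg q 1, 0) : QPd q × QPd q)
    = (q : ℂ) • rA q hq (1, 0) (Xg q 1) + (((q : ℂ) ^ 2) - 1) • rA q hq (0, 1) (Xg q 0) := by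
  simp only [rA, Mmat_Xg, Mgen, Matrix.cons_val', Matrix.cons_val_zero,
    Matrix.cons_val_one, Matrix.head_cons, Matrix.head_fin_const, Matrix.empty_val',
    Matrix.cons_val_fin_one, Matrix.of_apply, one_mul, zero_mul, mul_zero, add_zero, zero_add,
    mul_one, smul_smul, smul_zero, Prod.smul_mk, Prod.mk_add_mk, smul_add]
  rw [Prod.mk.injEq]
  constructor <;> match_scalars <;> field_simp <;> ring

theorem key2gen0 (p : QPd q × QPd q) : Rc q (rA q hq p (Xg q 0))
    = ((Rc q p).1 * Xg q 0, (Rc q p).2 * Xg q 0) := by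
  simp only [rA, Rc, Mmat_Xg, Mgen, Amat_Xg, Agen, Matrix.cons_val', Matrix.cons_val_zero,
    Matrix.cons_val_one, Matrix.head_cons, Matrix.head_fin_const, Matrix.empty_val',
    Matrix.cons_val_fin_one, Matrix.of_apply, map_add, map_mul, map_smul,
    Matrix.smul_apply, Matrix.mul_apply, Matrix.add_apply, Fin.sum_univ_two, mul_smul_comm,
    smul_mul_assoc, smul_smul, zero_mul, mul_zero, add_zero, zero_add, smul_add, smul_zero,
    add_mul, mul_one, one_mul]
  rw [Prod.mk.injEq]
  constructor <;> match_scalars <;> field_simp <;> ring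

theorem key2gen1 (p : QPd q × QPd q) : Rc q (rA q hq p (Xg q 1))
    = ((Rc q p).1 * Xg q 1, (Rc q p).2 * Xg q 1) := by
  simp only [rA, Rc, Mmat_Xg, Mgen, Amat_Xg, Agen, Matrix.cons_val', Matrix.cons_val_zero,
    Matrix.cons_val_one, Matrix.head_cons, Matrix.head_fin_const, Matrix.empty_val',
    Matrix.cons_val_fin_one, Matrix.of_apply, map_add, map_mul, map_smul,
    Matrix.smul_apply, Matrix.mul_apply, Matrix.add_apply, Fin.sum_univ_two, mul_smul_comm,
    smul_mul_assoc, smul_smul, zero_mul, mul_zero, add_zero, zero_add, smul_add, smul_zero,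
    add_mul, mul_one, one_mul, sub_mul, mul_sub, smul_sub, sub_smul]
  rw [Prod.mk.injEq]
  constructor <;> match_scalars <;> field_simp <;> ring

theorem key2gen2 (p : QPd q × QPd q) : Rc q (rA q hq p (Xg q 2))
    = ((Rc q p).1 * Xg q 2, (Rc q p).2 * Xg q 2) := by
  simp only [rA, Rc, Mmat_Xg, Mgen, Amat_Xg, Agen, Matrix.cons_val', Matrix.cons_val_zero,
    Matrix.cons_val_one, Matrix.head_cons, Matrix.head_fin_const, Matrix.empty_val',
    Matrix.cons_val_fin_one, Matrix.of_apply, map_add, map_mul, map_smul,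
    Matrix.smul_apply, Matrix.mul_apply, Matrix.add_apply, Fin.sum_univ_two, mul_smul_comm,
    smul_mul_assoc, smul_smul, zero_mul, mul_zero, add_zero, zero_add, smul_add, smul_zero,
    add_mul, mul_one, one_mul]

theorem key2gen3 (p : QPd q × QPd q) : Rc q (rA q hq p (Xg q 3))
    = ((Rc q p).1 * Xg q 3, (Rc q p).2 * Xg q 3) := by
  simp only [rA, Rc, Mmat_Xg, Mgen, Amat_Xg, Agen, Matrix.cons_val', Matrix.cons_val_zero,
    Matrix.cons_val_one, Matrix.head_cons, Matrix.head_fin_const, Matrix.empty_val',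
    Matrix.cons_val_fin_one, Matrix.of_apply, map_add, map_mul, map_smul,
    Matrix.smul_apply, Matrix.mul_apply, Matrix.add_apply, Fin.sum_univ_two, mul_smul_comm,
    smul_mul_assoc, smul_smul, zero_mul, mul_zero, add_zero, zero_add, smul_add, smul_zero,
    add_mul, mul_one, one_mul]

theorem key2 : ∀ f : QPd q, ∀ p : QPd q × QPd q,
    Rc q (rA q hq p f) = ((Rc q p).1 * f, (Rc q p).2 * f) := by
  refine qpd_induction q ?_ ?_ ?_ ?_
  · intro c p
    have h1 : rA q hq p (algebraMap ℂ (QPd q) c) = c • p := by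
      simp only [rA, Algebra.algebraMap_eq_smul_one, map_smul, map_one, Matrix.smul_apply,
        Matrix.one_apply]
      norm_num
      rfl
    rw [h1, Rc_smul]
    rw [Algebra.algebraMap_eq_smul_one]
    simp only [mul_smul_comm, mul_one]
    exact Prod.ext rfl rfl
  · intro i
    fin_cases i
    · exact key2gen0 q hq
    · exact key2gen1 q hq
    · exact key2gen2 q hq
    · exact key2gen3 q hq
  · intro f g hf hg p
    rw [rA_mulF, hg, hf]
    simp [mul_assoc]
  · intro f g hf hg p
    rw [rA_addF, Rc_add, hf, hg]
    simp [mul_add, Prod.mk_add_mk]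

end Act

section Vals

theorem psi_val_01_10 : psi q (0, 1) (1, 0) = (-((Real.sqrt q : ℝ) : ℂ)) • Xg q 2 := by
  rw [psi, Rc01, Rc10]
  simp [Fm, Matrix.one_apply]
  exact (neg_smul ((Real.sqrt q : ℝ) : ℂ) (Xg q 2)).symm

theorem psi_val_10_01 (hq0 : 0 ≤ q) : psi q (1, 0) (0, 1) = ((((Real.sqrt q) ^ 3 : ℝ)) : ℂ) • Xg q 2 := by
  rw [psi, Rc01, Rc10]
  have h : ((Real.sqrt q) ^ 3 : ℝ) = Real.sqrt q * q := by
    rw [pow_succ, Real.sq_sqrt hq0, mul_comm]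
  rw [h]
  simp [Fm, Matrix.one_apply]

theorem psi_val_10_10 : psi q (1, 0) (1, 0) = 0 := by
  rw [psi, Rc10]
  simp [Fm, Matrix.one_apply]

theorem psi_val_01_01 : psi q (0, 1) (0, 1) = 0 := by
  rw [psi, Rc01]
  simp [Fm, Matrix.one_apply]

end Vals

end PsiWD

/-- `Ω^{1,0}` is encoded by pairs `(a, b) = a ∂z + b ∂z*` (left coefficients).  With the
bimodule relations `z ∂z = q² (∂z) z`, `z* ∂z* = q² (∂z*) z*`, `z ∂z* = q (∂z*) z`,
`z* ∂z = q (∂z) z* + (q²-1)(∂z*) z`, the map `ψ₊` defined on generators by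
`ψ₊(∂z* ⊗ ∂z) = -q^{1/2} δ`, `ψ₊(∂z ⊗ ∂z*) = q^{3/2} δ`,
`ψ₊(∂z ⊗ ∂z) = ψ₊(∂z* ⊗ ∂z*) = 0` and extended as a bimodule map is well defined on
`Ω^{1,0} ⊗_B Ω^{1,0}` (i.e. balanced over the middle factor); in particular
`ψ₊((∂z) z* ⊗ ∂z*) = ψ₊(∂z ⊗ z* ∂z*)` in `B[δ, δ⁻¹]`. -/
theorem psi_plus_well_defined (q : ℝ) (hq : 0 < q) :
    ∃ (rA : QPd q × QPd q → QPd q → QPd q × QPd q)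
      (ψ : QPd q × QPd q → QPd q × QPd q → QPd q),
      -- `rA` is a right action compatible with the left action
      (∀ ω₁ ω₂ f, rA (ω₁ + ω₂) f = rA ω₁ f + rA ω₂ f) ∧
      (∀ ω f g, rA ω (f * g) = rA (rA ω f) g) ∧
      (∀ ω, rA ω 1 = ω) ∧
      (∀ (c : ℂ) ω f, rA (c • ω) f = c • rA ω f) ∧
      (∀ (a : QPd q) ω f, rA (a * ω.1, a * ω.2) f
          = (a * (rA ω f).1, a * (rA ω f).2)) ∧
      -- the bimodule relations, with `∂z = (1,0)`, `∂z* = (0,1)`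
      ((Xg q 0, 0) = ((q : ℂ) ^ 2) • rA (1, 0) (Xg q 0)) ∧
      ((0, Xg q 1) = ((q : ℂ) ^ 2) • rA (0, 1) (Xg q 1)) ∧
      ((0, Xg q 0) = (q : ℂ) • rA (0, 1) (Xg q 0)) ∧
      ((Xg q 1, 0) = (q : ℂ) • rA (1, 0) (Xg q 1)
          + (((q : ℂ) ^ 2) - 1) • rA (0, 1) (Xg q 0)) ∧
      -- `ψ` is a bimodule map, balanced over the middle factor
      (∀ ω₁ ω₂ η, ψ (ω₁ + ω₂) η = ψ ω₁ η + ψ ω₂ η) ∧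
      (∀ ω η₁ η₂, ψ ω (η₁ + η₂) = ψ ω η₁ + ψ ω η₂) ∧
      (∀ (c : ℂ) ω η, ψ (c • ω) η = c • ψ ω η) ∧
      (∀ (f : QPd q) ω η, ψ (f * ω.1, f * ω.2) η = f * ψ ω η) ∧
      (∀ ω η (f : QPd q), ψ ω (rA η f) = ψ ω η * f) ∧
      (∀ ω (f : QPd q) η, ψ (rA ω f) η = ψ ω (f * η.1, f * η.2)) ∧
      -- the values on generators
      ψ (0, 1) (1, 0) = (-((Real.sqrt q : ℝ) : ℂ)) • Xg q 2 ∧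
      ψ (1, 0) (0, 1) = ((((Real.sqrt q) ^ 3 : ℝ)) : ℂ) • Xg q 2 ∧
      ψ (1, 0) (1, 0) = 0 ∧
      ψ (0, 1) (0, 1) = 0 ∧
      -- in particular, balancedness on the displayed element:
      ψ (rA (1, 0) (Xg q 1)) (0, 1) = ψ (1, 0) (0, Xg q 1) := by
  have hqc : (q : ℂ) ≠ 0 := by
    simpa using hq.ne'
  have h15 : ∀ (ω : QPd q × QPd q) (f : QPd q) (η : QPd q × QPd q),
      PsiWD.psi q (PsiWD.rA q hqc ω f) η = PsiWD.psi q ω (f * η.1, f * η.2) := by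
    intro ω f η
    rw [PsiWD.psi, PsiWD.psi, PsiWD.key2 q hqc f ω, PsiWD.Fm_Af_right, PsiWD.Rc_leftmul]
  refine ⟨PsiWD.rA q hqc, PsiWD.psi q, PsiWD.rA_add q hqc, PsiWD.rA_mulF q hqc,
    PsiWD.rA_one q hqc, PsiWD.rA_smul q hqc, PsiWD.rA_leftmul q hqc,
    PsiWD.relz q hqc, PsiWD.relzs q hqc, PsiWD.relzzs q hqc, PsiWD.relzsz q hqc,
    ?_, ?_, ?_, ?_, ?_, h15,
    PsiWD.psi_val_01_10 q, PsiWD.psi_val_10_01 q hq.le, PsiWD.psi_val_10_10 q,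
    PsiWD.psi_val_01_01 q, ?_⟩
  · intro ω₁ ω₂ η
    rw [PsiWD.psi, PsiWD.psi, PsiWD.psi, PsiWD.Rc_add, PsiWD.Fm_add_left]
  · intro ω η₁ η₂
    rw [PsiWD.psi, PsiWD.psi, PsiWD.psi, PsiWD.Rc_add, PsiWD.Fm_add_right]
  · intro c ω η
    rw [PsiWD.psi, PsiWD.psi, PsiWD.Rc_smul, PsiWD.Fm_smul_left]
  · intro f ω η
    rw [PsiWD.psi, PsiWD.psi, PsiWD.Rc_leftmul]
    exact PsiWD.key1 q f (PsiWD.Rc q ω) (PsiWD.Rc q η)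
  · intro ω η f
    rw [PsiWD.psi, PsiWD.psi, PsiWD.key2 q hqc f η, PsiWD.Fm_mulf_right]
  · simpa using h15 (1, 0) (Xg q 1) (0, 1)
end
end
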